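/- Let $\alpha$ be a zero of the Bessel function $J_0$. Then for all real x one has $-\frac{J_0(\alpha e^{x})}{\alpha J_1(\alpha)} = \sum_{n\ge 0}\left(-\frac{\alpha^2}{4}\right)^n E_n(x)$, where $E_n(x) = \sum_{j=0}^{n}\frac{e^{2jx}(x+H_{n-j}-H_j)}{j!^2(n-j)!^2}$. -/

import Mathlib

/-!
Write `g t = ∑ (-t/4)ⁿ/n!²` and `k t = ∑ Hₙ (-t/4)ⁿ/n!²`, so that `J₀ y = g (y²)`.
Comparing coefficients, `g` solves `4t g'' + 4g' + g = 0` and `k` solves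
`4t k'' + 4k' + k = 4g'`; hence the Wronskian-type quantity `W = g² + 2t (g'k - g k')`
has derivative zero, and `W ≡ W 0 = 1`. At `t = α²`, where `g` vanishes, this reads
`2α² g'(α²) k(α²) = 1`, i.e. `-1/(α J₁ α) = k(α²)`. On the other side, with `s = α² e^{2x}`,
the series `∑ (-α²/4)ⁿ Eₙ(x)` is the Cauchy product
`x g(s) g(α²) + g(s) k(α²) - k(s) g(α²) = g(s) k(α²) = -J₀(α eˣ)/(α J₁ α)`.
-/

open Finset

/-- The `n`-th harmonic number, with `H 0 = 0`. -/
noncomputable def H (n : ℕ) : ℝ := ∑ i ∈ Finset.range n, (1 : ℝ) / (i + 1)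

/-- `E_n(x) = ∑_{j=0}^{n} e^{2jx}(x + H_{n-j} - H_j)/(j!² (n-j)!²)`. -/
noncomputable def E (n : ℕ) (x : ℝ) : ℝ :=
  ∑ j ∈ Finset.range (n + 1),
    Real.exp (2 * j * x) * (x + H (n - j) - H j) / ((j.factorial : ℝ) ^ 2 * ((n - j).factorial : ℝ) ^ 2)

/-- The Bessel function of the first kind of order 0: `J₀(x) = ∑_{n≥0} (-x²/4)ⁿ/n!²`. -/
noncomputable def J0 (x : ℝ) : ℝ := ∑' n : ℕ, (-(x ^ 2) / 4) ^ n / ((n.factorial : ℝ) ^ 2)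

/-- The Bessel function of the first kind of order 1, via `J₀' = -J₁`. -/
noncomputable def J1 (x : ℝ) : ℝ := -(deriv J0 x)

-- Enough decay for `series a` to be entire and differentiable term by term.
def FactorialBounded (a : ℕ → ℝ) : Prop :=
  ∃ C : ℝ, 1 ≤ C ∧ ∀ n, |a n| ≤ C ^ (n + 1) / n.factorial

noncomputable def series (a : ℕ → ℝ) (t : ℝ) : ℝ := ∑' n, a n * t ^ n

def derivCoeff (a : ℕ → ℝ) (n : ℕ) : ℝ := (n + 1) * a (n + 1)

namespace FactorialBounded

variable {a b : ℕ → ℝ}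

theorem of_abs_le_natCast_mul (ha : FactorialBounded a) (hb : ∀ n, |b n| ≤ n * |a n|) :
    FactorialBounded b := by
  obtain ⟨C, hC, ha⟩ := ha
  refine ⟨2 * C, by linarith, fun n => ?_⟩
  have hn : (n : ℝ) ≤ 2 ^ (n + 1) := by
    exact_mod_cast (Nat.lt_two_pow_self.trans (Nat.pow_lt_pow_right one_lt_two n.lt_succ_self)).le
  calc |b n| ≤ n * |a n| := hb n
    _ ≤ 2 ^ (n + 1) * (C ^ (n + 1) / n.factorial) := by gcongr; exact ha n
    _ = (2 * C) ^ (n + 1) / n.factorial := by rw [mul_pow]; ring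

theorem natCast_mul (ha : FactorialBounded a) : FactorialBounded fun n => n * a n :=
  ha.of_abs_le_natCast_mul fun n => by rw [abs_mul, Nat.abs_cast]

theorem derivCoeff (ha : FactorialBounded a) : FactorialBounded (_root_.derivCoeff a) := by
  obtain ⟨C, hC, ha⟩ := ha
  refine ⟨C ^ 2, one_le_pow₀ hC, fun n => ?_⟩
  calc |_root_.derivCoeff a n| = (n + 1) * |a (n + 1)| := by
        rw [_root_.derivCoeff, abs_mul, abs_of_nonneg (by positivity)]
    _ ≤ (n + 1) * (C ^ (n + 2) / (n + 1).factorial) := by gcongr; exact ha (n + 1)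
    _ = C ^ (n + 2) / n.factorial := by
        rw [Nat.factorial_succ]; push_cast; field_simp
    _ ≤ (C ^ 2) ^ (n + 1) / n.factorial := by
        rw [← pow_mul]; gcongr; omega

theorem summable_norm (ha : FactorialBounded a) (t : ℝ) :
    Summable fun n => ‖a n * t ^ n‖ := by
  obtain ⟨C, hC, ha⟩ := ha
  refine .of_nonneg_of_le (fun n => norm_nonneg _) (fun n => ?_)
    ((Real.summable_pow_div_factorial (C * |t|)).mul_left C)
  calc ‖a n * t ^ n‖ = |a n| * |t| ^ n := by simp only [norm_mul, norm_pow, Real.norm_eq_abs]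
    _ ≤ C ^ (n + 1) / n.factorial * |t| ^ n := by gcongr; exact ha n
    _ = C * ((C * |t|) ^ n / n.factorial) := by ring

theorem summable (ha : FactorialBounded a) (t : ℝ) : Summable fun n => a n * t ^ n :=
  (ha.summable_norm t).of_norm

theorem hasDerivAt_series (ha : FactorialBounded a) (t : ℝ) :
    HasDerivAt (series a) (series (_root_.derivCoeff a) t) t := by
  obtain ⟨C, hC, hCa⟩ := ha.natCast_mul
  set R := |t| + 1
  have hR : 1 ≤ R := by simp [R]
  have ht : t ∈ Metric.ball (0 : ℝ) R := by simp [R]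
  have hbound : ∀ n, ∀ y ∈ Metric.ball (0 : ℝ) R,
      ‖a n * (n * y ^ (n - 1))‖ ≤ C * ((C * R) ^ n / n.factorial) := by
    intro n y hy
    have hyR : |y| ≤ R := by simpa using (mem_ball_zero_iff.mp hy).le
    calc ‖a n * (n * y ^ (n - 1))‖ = |n * a n| * |y| ^ (n - 1) := by
          rw [Real.norm_eq_abs, abs_mul, abs_mul, abs_mul, abs_pow, Nat.abs_cast]; ring
      _ ≤ C ^ (n + 1) / n.factorial * R ^ n := by
          gcongr
          · exact hCa n
          · exact (pow_le_pow_left₀ (abs_nonneg y) hyR _).trans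
              (pow_le_pow_right₀ hR (by omega))
      _ = C * ((C * R) ^ n / n.factorial) := by rw [mul_pow]; ring
  have hderiv := hasDerivAt_tsum_of_isPreconnected
    ((Real.summable_pow_div_factorial (C * R)).mul_left C) Metric.isOpen_ball
    (convex_ball (0 : ℝ) R).isPreconnected (fun n y _ => (hasDerivAt_pow n y).const_mul (a n))
    hbound (Metric.mem_ball_self (by positivity)) (ha.summable 0) ht
  have hsum : Summable fun n => a n * (n * t ^ (n - 1)) :=
    .of_norm_bounded ((Real.summable_pow_div_factorial (C * R)).mul_left C)
      fun n => hbound n t ht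
  have hseries : series (_root_.derivCoeff a) t = ∑' n, a n * (n * t ^ (n - 1)) := by
    rw [hsum.tsum_eq_zero_add, series]
    simp only [CharP.cast_eq_zero, zero_mul, mul_zero, zero_add, _root_.derivCoeff]
    exact tsum_congr fun n => by push_cast; ring
  rw [hseries]
  exact hderiv

theorem mul_series_derivCoeff (ha : FactorialBounded a) (t : ℝ) :
    t * series (_root_.derivCoeff a) t = series (fun n => n * a n) t := by
  rw [series, series, (ha.natCast_mul.summable t).tsum_eq_zero_add, ← tsum_mul_left]
  simp only [CharP.cast_eq_zero, zero_mul, zero_add, _root_.derivCoeff]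
  exact tsum_congr fun n => by push_cast; ring

theorem series_ode_of_coeff_rec {q : ℕ → ℝ} (ha : FactorialBounded a)
    (hrec : ∀ n : ℕ, 4 * ((n : ℝ) + 1) ^ 2 * a (n + 1) + a n = q n) (t : ℝ) :
    4 * t * series (_root_.derivCoeff (_root_.derivCoeff a)) t
      + 4 * series (_root_.derivCoeff a) t + series a t = series q t := by
  have h1 := ha.derivCoeff.natCast_mul.summable t
  have h2 := ha.derivCoeff.summable t
  have h3 := ha.summable t
  rw [mul_assoc, ha.derivCoeff.mul_series_derivCoeff, series, series, series, series,
    ← tsum_mul_left, ← tsum_mul_left, ← (h1.mul_left 4).tsum_add (h2.mul_left 4),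
    ← ((h1.mul_left 4).add (h2.mul_left 4)).tsum_add h3]
  refine tsum_congr fun n => ?_
  rw [← hrec n, _root_.derivCoeff]
  ring

theorem hasSum_series_mul_series (ha : FactorialBounded a) (hb : FactorialBounded b) (s t : ℝ) :
    HasSum (fun n => ∑ j ∈ range (n + 1), a j * s ^ j * (b (n - j) * t ^ (n - j)))
      (series a s * series b t) := by
  rw [series, series, tsum_mul_tsum_eq_tsum_sum_range_of_summable_norm (ha.summable_norm s)
    (hb.summable_norm t)]
  exact (summable_norm_sum_mul_range_of_summable_norm (ha.summable_norm s)
    (hb.summable_norm t)).of_norm.hasSum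

end FactorialBounded

theorem series_zero (a : ℕ → ℝ) : series a 0 = a 0 := by
  rw [series, tsum_eq_single 0 fun n hn => by rw [zero_pow hn, mul_zero]]
  simp

theorem H_succ (n : ℕ) : H (n + 1) = H n + 1 / (n + 1) := by
  rw [H, sum_range_succ, H]

theorem H_nonneg (n : ℕ) : 0 ≤ H n :=
  sum_nonneg fun i _ => by positivity

theorem H_le (n : ℕ) : H n ≤ n := by
  induction n with
  | zero => simp [H]
  | succ n ih =>
    rw [H_succ]
    have hinv : 1 / ((n : ℝ) + 1) ≤ 1 := div_le_one_of_le₀ (by simp) (by positivity)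
    push_cast
    linarith

noncomputable def besselCoeff (n : ℕ) : ℝ := (-1 / 4) ^ n / (n.factorial : ℝ) ^ 2

noncomputable def besselHarmonicCoeff (n : ℕ) : ℝ := H n * besselCoeff n

theorem factorialBounded_besselCoeff : FactorialBounded besselCoeff := by
  refine ⟨1, le_rfl, fun n => ?_⟩
  have hf : (1 : ℝ) ≤ n.factorial := by exact_mod_cast n.factorial_pos
  calc |besselCoeff n| = (1 / 4) ^ n * (1 / n.factorial) * (1 / n.factorial) := by
        rw [besselCoeff, abs_div, abs_pow, abs_of_nonneg (by positivity : (0 : ℝ) ≤ _ ^ 2)]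
        norm_num
        ring
    _ ≤ 1 * (1 / n.factorial) * 1 := by
        gcongr
        · exact pow_le_one₀ (by norm_num) (by norm_num)
        · exact div_le_one_of_le₀ hf (by positivity)
    _ = 1 ^ (n + 1) / n.factorial := by ring

theorem factorialBounded_besselHarmonicCoeff : FactorialBounded besselHarmonicCoeff :=
  factorialBounded_besselCoeff.of_abs_le_natCast_mul fun n => by
    rw [besselHarmonicCoeff, abs_mul, abs_of_nonneg (H_nonneg n)]
    gcongr
    exact H_le n

theorem besselCoeff_rec (n : ℕ) :
    4 * ((n : ℝ) + 1) ^ 2 * besselCoeff (n + 1) + besselCoeff n = 0 := by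
  rw [besselCoeff, besselCoeff, Nat.factorial_succ]
  push_cast
  field_simp
  ring

theorem besselHarmonicCoeff_rec (n : ℕ) :
    4 * ((n : ℝ) + 1) ^ 2 * besselHarmonicCoeff (n + 1) + besselHarmonicCoeff n
      = 4 * derivCoeff besselCoeff n := by
  have hcancel : ((n : ℝ) + 1) ^ 2 * (1 / (n + 1)) = n + 1 := by field_simp
  rw [besselHarmonicCoeff, besselHarmonicCoeff, derivCoeff, H_succ]
  linear_combination H n * besselCoeff_rec n + 4 * besselCoeff (n + 1) * hcancel

theorem series_besselCoeff_ode (t : ℝ) :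
    4 * t * series (derivCoeff (derivCoeff besselCoeff)) t + 4 * series (derivCoeff besselCoeff) t
      + series besselCoeff t = 0 := by
  rw [factorialBounded_besselCoeff.series_ode_of_coeff_rec besselCoeff_rec t]
  simp [series]

theorem series_besselHarmonicCoeff_ode (t : ℝ) :
    4 * t * series (derivCoeff (derivCoeff besselHarmonicCoeff)) t
      + 4 * series (derivCoeff besselHarmonicCoeff) t + series besselHarmonicCoeff t
      = 4 * series (derivCoeff besselCoeff) t := by
  rw [factorialBounded_besselHarmonicCoeff.series_ode_of_coeff_rec besselHarmonicCoeff_rec t,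
    series, series, ← tsum_mul_left]
  exact tsum_congr fun n => by ring

noncomputable def besselWronskian (t : ℝ) : ℝ :=
  series besselCoeff t ^ 2
    + 2 * t * (series (derivCoeff besselCoeff) t * series besselHarmonicCoeff t
      - series besselCoeff t * series (derivCoeff besselHarmonicCoeff) t)

theorem hasDerivAt_besselWronskian (t : ℝ) : HasDerivAt besselWronskian 0 t := by
  have hg := factorialBounded_besselCoeff.hasDerivAt_series t
  have hg' := factorialBounded_besselCoeff.derivCoeff.hasDerivAt_series t
  have hk := factorialBounded_besselHarmonicCoeff.hasDerivAt_series t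
  have hk' := factorialBounded_besselHarmonicCoeff.derivCoeff.hasDerivAt_series t
  refine (((hg.pow 2).add (((hasDerivAt_id t).const_mul 2).mul
    ((hg'.mul hk).sub (hg.mul hk'))))).congr_deriv ?_
  simp only [Pi.mul_apply, Pi.sub_apply, id]
  linear_combination series besselHarmonicCoeff t / 2 * series_besselCoeff_ode t
    - series besselCoeff t / 2 * series_besselHarmonicCoeff_ode t

theorem besselWronskian_eq_one (t : ℝ) : besselWronskian t = 1 := by
  rw [is_const_of_deriv_eq_zero (fun y => (hasDerivAt_besselWronskian y).differentiableAt)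
    (fun y => (hasDerivAt_besselWronskian y).deriv) t 0, besselWronskian, series_zero]
  norm_num [besselCoeff]

theorem J0_eq_series (y : ℝ) : J0 y = series besselCoeff (y ^ 2) :=
  tsum_congr fun n => by rw [besselCoeff, div_mul_eq_mul_div, ← mul_pow]; ring

theorem mul_J1_eq (y : ℝ) :
    y * J1 y = -(2 * y ^ 2 * series (derivCoeff besselCoeff) (y ^ 2)) := by
  have hJ0 : J0 = series besselCoeff ∘ fun y => y ^ 2 := funext J0_eq_series
  have hderiv := (factorialBounded_besselCoeff.hasDerivAt_series (y ^ 2)).comp y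
    (hasDerivAt_pow 2 y)
  rw [J1, hJ0, hderiv.deriv]
  ring

theorem neg_sq_div_four_pow_mul_E_summand (α x : ℝ) (j m : ℕ) :
    (-(α ^ 2) / 4) ^ (j + m) * (Real.exp (2 * j * x) * (x + H m - H j)
      / ((j.factorial : ℝ) ^ 2 * (m.factorial : ℝ) ^ 2))
    = x * (besselCoeff j * ((α * Real.exp x) ^ 2) ^ j * (besselCoeff m * (α ^ 2) ^ m))
      + besselCoeff j * ((α * Real.exp x) ^ 2) ^ j * (besselHarmonicCoeff m * (α ^ 2) ^ m)
      - besselHarmonicCoeff j * ((α * Real.exp x) ^ 2) ^ j * (besselCoeff m * (α ^ 2) ^ m) := by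
  have hexp : Real.exp (2 * j * x) = Real.exp x ^ (2 * j) := by
    rw [← Real.exp_nat_mul]; push_cast; ring_nf
  rw [besselHarmonicCoeff, besselHarmonicCoeff, besselCoeff, besselCoeff, hexp]
  field_simp
  ring

theorem hasSum_neg_sq_div_four_pow_mul_E (α x : ℝ) :
    HasSum (fun n => (-(α ^ 2) / 4) ^ n * E n x)
      (x * (series besselCoeff ((α * Real.exp x) ^ 2) * series besselCoeff (α ^ 2))
        + series besselCoeff ((α * Real.exp x) ^ 2) * series besselHarmonicCoeff (α ^ 2)
        - series besselHarmonicCoeff ((α * Real.exp x) ^ 2) * series besselCoeff (α ^ 2)) := by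
  have hc := factorialBounded_besselCoeff
  have hk := factorialBounded_besselHarmonicCoeff
  refine (congrArg (HasSum · _) (funext fun n => ?_)).mpr
    ((((hc.hasSum_series_mul_series hc _ _).mul_left x).add
      (hc.hasSum_series_mul_series hk _ _)).sub (hk.hasSum_series_mul_series hc _ _))
  rw [E, mul_sum, mul_sum, ← sum_add_distrib, ← sum_sub_distrib]
  refine sum_congr rfl fun j hj => ?_
  obtain ⟨m, rfl⟩ := Nat.exists_eq_add_of_le (Nat.lt_succ_iff.mp (mem_range.mp hj))
  rw [Nat.add_sub_cancel_left]
  exact neg_sq_div_four_pow_mul_E_summand α x j m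

/-- If `α` is a zero of `J₀`, then for all real `x`,
`-J₀(α eˣ)/(α J₁(α)) = ∑_{n≥0} (-α²/4)ⁿ Eₙ(x)`. -/
theorem stmt_2 (α : ℝ) (hα : J0 α = 0) (x : ℝ) :
    -(J0 (α * Real.exp x)) / (α * J1 α) = ∑' n : ℕ, (-(α ^ 2) / 4) ^ n * E n x := by
  have hg : series besselCoeff (α ^ 2) = 0 := J0_eq_series α ▸ hα
  have hW := besselWronskian_eq_one (α ^ 2)
  rw [besselWronskian, hg] at hW
  have hJ1 : α * J1 α ≠ 0 := by
    rw [mul_J1_eq]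
    intro h
    exact one_ne_zero (by linear_combination -hW - series besselHarmonicCoeff (α ^ 2) * h)
  rw [(hasSum_neg_sq_div_four_pow_mul_E α x).tsum_eq, hg, div_eq_iff hJ1, mul_J1_eq,
    J0_eq_series]
  linear_combination series besselCoeff ((α * Real.exp x) ^ 2) * hW
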